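/- Let G be a cosheaf on a T0 Alexandroff space X. Then for every open set U of X, the natural map colim over x ∈ U of G(U_x) → G(U), induced by the inclusions U_x ⊆ U, is an isomorphism, where the colimit is taken over the poset U with x ≤ y iff U_x ⊆ U_y. -/

import Mathlib

open CategoryTheory CategoryTheory.Limits TopologicalSpace


/-- The minimal open set containing `x`. -/
def minOpen {X : Type} [TopologicalSpace X] (x : X) : Set X :=
  ⋂₀ {U : Set X | IsOpen U ∧ x ∈ U}

lemma isOpen_minOpen {X : Type} [TopologicalSpace X] [AlexandrovDiscrete X] (x : X) :
    IsOpen (minOpen x) :=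
  isOpen_sInter fun _ h => h.1

/-- The minimal open set containing `x`, as an element of `Opens X`. -/
def Uo {X : Type} [TopologicalSpace X] [AlexandrovDiscrete X] (x : X) : Opens X :=
  ⟨minOpen x, isOpen_minOpen x⟩

lemma minOpen_le {X : Type} [TopologicalSpace X] {x : X} {U : Opens X} (hx : x ∈ U) :
    minOpen x ⊆ (U : Set X) :=
  Set.sInter_subset_of_mem ⟨U.isOpen, hx⟩

/-- A precosheaf of abelian groups on `X`: a covariant functor on open sets. -/
abbrev Precosheaf (X : Type) [TopologicalSpace X] := Opens X ⥤ AddCommGrpCat.{0}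

variable {X : Type} [TopologicalSpace X]

/-- The nerve of an open cover: the nonempty finite intersections of its members. -/
def nerveSet (𝒰 : Set (Opens X)) : Set (Opens X) :=
  {V | (V : Set X).Nonempty ∧ ∃ s : Finset (Opens X), ↑s ⊆ 𝒰 ∧ s.Nonempty ∧ V = s.inf id}

lemma nerve_le {𝒰 : Set (Opens X)} {U : Opens X} (h : ∀ V ∈ 𝒰, V ≤ U)
    {V : Opens X} (hV : V ∈ nerveSet 𝒰) : V ≤ U := by
  obtain ⟨-, s, hs, ⟨w, hw⟩, rfl⟩ := hV
  exact le_trans (Finset.inf_le hw) (h w (hs hw))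

/-- The diagram of a precosheaf over the nerve of an open cover. -/
def nerveDiagram (F : Precosheaf X) (𝒰 : Set (Opens X)) :
    ObjectProperty.FullSubcategory (· ∈ nerveSet 𝒰) ⥤ AddCommGrpCat.{0} :=
  ObjectProperty.ι (· ∈ nerveSet 𝒰) ⋙ F

/-- The canonical cocone on the nerve diagram with apex `F(U)`. -/
def coverCocone (F : Precosheaf X) (U : Opens X) (𝒰 : Set (Opens X))
    (h : ∀ V ∈ 𝒰, V ≤ U) : Cocone (nerveDiagram F 𝒰) where
  pt := F.obj U
  ι :=
    { app := fun V => F.map (homOfLE (nerve_le h V.2))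
      naturality := fun a b f => by
        dsimp [nerveDiagram]
        rw [Category.comp_id, ← F.map_comp]
        rfl }

/-- A precosheaf is a cosheaf if for every open `U` and every open cover `𝒰` of `U`, the
canonical map from the colimit over the nerve of `𝒰` to `F(U)` is an isomorphism, i.e.
`F(U)` is the colimit of the nerve diagram. -/
def IsCosheaf (F : Precosheaf X) : Prop :=
  ∀ (U : Opens X) (𝒰 : Set (Opens X)) (h𝒰 : ∀ V ∈ 𝒰, V ≤ U), U ≤ sSup 𝒰 →
    Nonempty (IsColimit (coverCocone F U 𝒰 h𝒰))

/-- The Alexandroff space `X(P)` of a poset `P`: open sets are the up-sets. -/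
def upTop (P : Type) [Preorder P] : TopologicalSpace P where
  IsOpen := IsUpperSet
  isOpen_univ := isUpperSet_univ
  isOpen_inter _ _ := IsUpperSet.inter
  isOpen_sUnion _ h := isUpperSet_sUnion h

variable {P : Type} [PartialOrder P]

/-- The diagram of a cellular cosheaf `F : P ⥤ Ab` over the subposet `U ⊆ P`. -/
def openDiagram (F : P ⥤ AddCommGrpCat.{0}) (U : Set P) :
    ObjectProperty.FullSubcategory (· ∈ U) ⥤ AddCommGrpCat.{0} :=
  ObjectProperty.ι (· ∈ U) ⋙ F

noncomputable def hatMap (F : P ⥤ AddCommGrpCat.{0}) {U V : Set P} (h : U ⊆ V) :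
    colimit (openDiagram F U) ⟶ colimit (openDiagram F V) :=
  colimit.pre (openDiagram F V) (ObjectProperty.ιOfLE fun _ hx => h hx)

lemma hatMap_ι (F : P ⥤ AddCommGrpCat.{0}) {U V : Set P} (h : U ⊆ V)
    (j : ObjectProperty.FullSubcategory (· ∈ U)) :
    colimit.ι (openDiagram F U) j ≫ hatMap F h =
      colimit.ι (openDiagram F V) ⟨j.1, h j.2⟩ := by
  exact colimit.ι_pre (openDiagram F V) (ObjectProperty.ιOfLE fun _ hx => h hx) j

/-- The cosheaf `F̂` on `X(P)` associated to a cellular cosheaf `F : P ⥤ Ab`,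
with `F̂(U) = colim_{x ∈ U} F(x)`. -/
noncomputable def hatF (F : P ⥤ AddCommGrpCat.{0}) :
    @TopologicalSpace.Opens P (upTop P) ⥤ AddCommGrpCat.{0} where
  obj U := colimit (openDiagram F (U : Set P))
  map {U V} h := hatMap F h.le
  map_id U := by
    apply colimit.hom_ext
    intro j
    erw [hatMap_ι]
    simp
  map_comp {U V W} f g := by
    apply colimit.hom_ext
    intro j
    exact (hatMap_ι F (f ≫ g).le j).trans ((hatMap_ι F g.le ⟨j.1, f.le j.2⟩).symm.trans
      ((congrArg (· ≫ hatMap F g.le) (hatMap_ι F f.le j).symm).trans (Category.assoc _ _ _)))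

section PtDiagram
variable {X : Type} [TopologicalSpace X]

/-- The points of `U`, preordered by `x ≤ y` iff `U_x ⊆ U_y`. -/
def PtCat (U : Set X) : Type := {x : X // x ∈ U}

instance (U : Set X) : Preorder (PtCat U) where
  le a b := minOpen a.1 ⊆ minOpen b.1
  le_refl _ := subset_rfl
  le_trans _ _ _ h1 h2 := Set.Subset.trans h1 h2

variable [AlexandrovDiscrete X]

/-- The diagram `x ∈ U ↦ G(U_x)` over the poset `U` (with `x ≤ y` iff `U_x ⊆ U_y`). -/
def ptDiagram (G : Precosheaf X) (U : Set X) : PtCat U ⥤ AddCommGrpCat.{0} where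
  obj x := G.obj (Uo x.1)
  map {a b} f := G.map (homOfLE (SetLike.coe_subset_coe.mp f.le))
  map_id a := G.map_id _
  map_comp f g := G.map_comp _ _

/-- The canonical cocone on `ptDiagram G U` with apex `G(U)`, given by the inclusions
`U_x ⊆ U`. -/
def ptCocone (G : Precosheaf X) (U : Opens X) : Cocone (ptDiagram G (U : Set X)) where
  pt := G.obj U
  ι :=
    { app := fun x => G.map (homOfLE (minOpen_le x.2))
      naturality := fun a b f => by
        dsimp [ptDiagram]
        rw [Category.comp_id, ← G.map_comp]
        rfl }

end PtDiagram

/-! Every member `V` of the nerve of the cover `{U_z | z ∈ U}` lies in some `U_z`, and the cosheaf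
condition for the cover of `V` by its own minimal open sets makes the maps `G(U_w) → G(V)`, `w ∈ V`,
jointly epimorphic. Hence, for a cocone `c` on `x ↦ G(U_x)`, the composite `G(V) → G(U_z) → c` does
not depend on the choice of `z`; this extends `c` to a cocone on the nerve diagram, and the cosheaf
condition for `U` gives the unique factorisation through `G(U)`. -/

section MinimalOpenCover

lemma mem_minOpen_self {X : Type} [TopologicalSpace X] (x : X) : x ∈ minOpen x :=
  Set.mem_sInter.mpr fun _ hU => hU.2

variable {X : Type} [TopologicalSpace X] [AlexandrovDiscrete X]

lemma Uo_le_of_mem {z : X} {W : Opens X} (hz : z ∈ W) : Uo z ≤ W :=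
  minOpen_le hz

lemma le_of_mem_image_Uo (W : Opens X) : ∀ V ∈ Uo '' (W : Set X), V ≤ W := by
  rintro _ ⟨z, hz, rfl⟩
  exact Uo_le_of_mem hz

lemma le_sSup_image_Uo (W : Opens X) : W ≤ sSup (Uo '' (W : Set X)) := fun x hx =>
  Opens.mem_sSup.mpr ⟨Uo x, ⟨x, hx, rfl⟩, mem_minOpen_self x⟩

lemma Uo_mem_nerveSet {z : X} {W : Opens X} (hz : z ∈ W) :
    Uo z ∈ nerveSet (Uo '' (W : Set X)) :=
  ⟨⟨z, mem_minOpen_self z⟩, {Uo z}, by simpa using ⟨z, hz, rfl⟩, by simp, by simp⟩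

lemma exists_le_Uo_of_mem_nerveSet {W V : Opens X} (hV : V ∈ nerveSet (Uo '' (W : Set X))) :
    ∃ z : PtCat (W : Set X), V ≤ Uo z.1 := by
  obtain ⟨-, s, hs, ⟨w, hw⟩, rfl⟩ := hV
  obtain ⟨z, hz, rfl⟩ := hs hw
  exact ⟨⟨z, hz⟩, Finset.inf_le hw⟩

variable {G : Precosheaf X}

-- `PtCat` is a non-reducible synonym of the subtype, so rewriting next to `Uo z.1` needs `erw`.

lemma coverCocone_ι_app_eq {W : Opens X}
    {V : ObjectProperty.FullSubcategory (· ∈ nerveSet (Uo '' (W : Set X)))}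
    {z : PtCat (W : Set X)} (hV : V.obj ≤ Uo z.1) :
    (coverCocone G W _ (le_of_mem_image_Uo W)).ι.app V =
      G.map (homOfLE hV) ≫ (ptCocone G W).ι.app z := by
  dsimp only [coverCocone, ptCocone]
  erw [← G.map_comp, homOfLE_comp]

lemma ptCocone_ι_app_eq_coverCocone {W : Opens X} (x : PtCat (W : Set X)) :
    (ptCocone G W).ι.app x =
      (coverCocone G W _ (le_of_mem_image_Uo W)).ι.app ⟨Uo x.1, Uo_mem_nerveSet x.2⟩ :=
  rfl

lemma cocone_ptDiagram_w {U : Set X} (c : Cocone (ptDiagram G U))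
    {w z : PtCat U} (h : Uo w.1 ≤ Uo z.1) :
    G.map (homOfLE h) ≫ c.ι.app z = c.ι.app w :=
  c.w (homOfLE (show w ≤ z from h))

lemma IsCosheaf.ptCocone_hom_ext (hG : IsCosheaf G) {W : Opens X} {A : AddCommGrpCat.{0}}
    {f f' : G.obj W ⟶ A}
    (h : ∀ x, (ptCocone G W).ι.app x ≫ f = (ptCocone G W).ι.app x ≫ f') : f = f' := by
  obtain ⟨hW⟩ := hG W _ (le_of_mem_image_Uo W) (le_sSup_image_Uo W)
  refine hW.hom_ext fun V => ?_
  obtain ⟨z, hV⟩ := exists_le_Uo_of_mem_nerveSet V.2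
  erw [coverCocone_ι_app_eq hV, Category.assoc, Category.assoc]
  exact _ ≫= h z

lemma IsCosheaf.map_homOfLE_comp_ι_eq (hG : IsCosheaf G) {U : Opens X}
    (c : Cocone (ptDiagram G U)) {V : Opens X} {z z' : PtCat (U : Set X)}
    (h : V ≤ Uo z.1) (h' : V ≤ Uo z'.1) :
    G.map (homOfLE h) ≫ c.ι.app z = G.map (homOfLE h') ≫ c.ι.app z' := by
  refine hG.ptCocone_hom_ext fun w => ?_
  let w' : PtCat (U : Set X) := ⟨w.1, Uo_le_of_mem z.2 (h w.2)⟩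
  have through_w : ∀ {y : PtCat (U : Set X)} (hy : V ≤ Uo y.1),
      (ptCocone G V).ι.app w ≫ G.map (homOfLE hy) ≫ c.ι.app y = c.ι.app w' := fun _ => by
    dsimp only [ptCocone]
    erw [← G.map_comp_assoc, homOfLE_comp]
    exact cocone_ptDiagram_w c (w := w') _
  exact (through_w h).trans (through_w h').symm

noncomputable def IsCosheaf.nerveCocone (hG : IsCosheaf G) {U : Opens X}
    (c : Cocone (ptDiagram G U)) : Cocone (nerveDiagram G (Uo '' (U : Set X))) where
  pt := c.pt
  ι :=
    { app := fun V =>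
        G.map (homOfLE (exists_le_Uo_of_mem_nerveSet V.2).choose_spec) ≫
          c.ι.app (exists_le_Uo_of_mem_nerveSet V.2).choose
      naturality := fun Va Vb f => by
        dsimp only [nerveDiagram, Functor.comp_map, ObjectProperty.ι_map, Functor.const_obj_map]
        erw [Category.comp_id, ← Category.assoc, ← G.map_comp, homOfLE_comp]
        exact hG.map_homOfLE_comp_ι_eq c _ _ }

lemma IsCosheaf.nerveCocone_ι_app (hG : IsCosheaf G) {U : Opens X} (c : Cocone (ptDiagram G U))
    {V : ObjectProperty.FullSubcategory (· ∈ nerveSet (Uo '' (U : Set X)))}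
    {z : PtCat (U : Set X)} (hV : V.obj ≤ Uo z.1) :
    (hG.nerveCocone c).ι.app V = G.map (homOfLE hV) ≫ c.ι.app z :=
  hG.map_homOfLE_comp_ι_eq c _ _

end MinimalOpenCover

theorem stmt_8_general {X : Type} [TopologicalSpace X] [AlexandrovDiscrete X]
    (G : Precosheaf X) (hG : IsCosheaf G) (U : Opens X) :
    Nonempty (IsColimit (ptCocone G U)) := by
  obtain ⟨hU⟩ := hG U _ (le_of_mem_image_Uo U) (le_sSup_image_Uo U)
  refine ⟨⟨fun c => hU.desc (hG.nerveCocone c), fun c x => ?_,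
    fun c m hm => hU.uniq (hG.nerveCocone c) m fun V => ?_⟩⟩
  · rw [ptCocone_ι_app_eq_coverCocone]
    exact (hU.fac _ _).trans
      ((hG.nerveCocone_ι_app c (z := x) le_rfl).trans (cocone_ptDiagram_w c le_rfl))
  · obtain ⟨z, hV⟩ := exists_le_Uo_of_mem_nerveSet V.2
    erw [coverCocone_ι_app_eq hV, hG.nerveCocone_ι_app c hV, Category.assoc]
    exact _ ≫= hm z

/-- For a cosheaf `G` on a `T0` Alexandroff space, the natural map
`colim_{x ∈ U} G(U_x) → G(U)` is an isomorphism for every open `U`. -/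
theorem stmt_8 {X : Type} [TopologicalSpace X] [AlexandrovDiscrete X] [T0Space X]
    (G : Precosheaf X) (hG : IsCosheaf G) (U : Opens X) :
    Nonempty (IsColimit (ptCocone G U)) :=
  stmt_8_general G hG U
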